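/- Let φ : 𝒫(ℕ) → [0,∞] be a lower semicontinuous submeasure and let (A_n)_{n∈ℕ} be an increasing sequence of subsets of ℕ with Σ_{n} ‖A_{n+1} \ A_n‖_φ < ∞. Then there exists A ⊆ ℕ such that A_n \ A is finite for every n ∈ ℕ and lim_{n→∞} ‖A △ A_n‖_φ = 0. -/

import Mathlib

open Filter Topology
open scoped ENNReal

/-- The `φ`-mass at infinity `‖A‖_φ = lim_n φ(A \ {0,…,n-1})`; since the sequence is
nonincreasing (for monotone `φ`), the limit equals the infimum. -/
noncomputable def exhNorm (φ : Set ℕ → ℝ≥0∞) (A : Set ℕ) : ℝ≥0∞ :=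
  ⨅ n : ℕ, φ (A \ Set.Iio n)

section aux
variable (φ : Set ℕ → ℝ≥0∞)

lemma exhNorm_le_phi (A : Set ℕ) : exhNorm φ A ≤ φ A := by
  have h : exhNorm φ A ≤ φ (A \ Set.Iio 0) := iInf_le _ 0
  have e : A \ Set.Iio 0 = A := by ext x; simp
  rwa [e] at h

lemma exhNorm_mono (hφmono : ∀ A B : Set ℕ, A ⊆ B → φ A ≤ φ B)
    {A B : Set ℕ} (h : A ⊆ B) : exhNorm φ A ≤ exhNorm φ B :=
  iInf_mono fun n => hφmono _ _ (Set.diff_subset_diff_left h)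

lemma exhNorm_finite (hφ0 : φ ∅ = 0) {F : Set ℕ} (hF : F.Finite) :
    exhNorm φ F = 0 := by
  obtain ⟨n, hn⟩ : ∃ n, F ⊆ Set.Iio n := by
    refine ⟨hF.toFinset.sup id + 1, fun x hx => ?_⟩
    simp only [Set.mem_Iio]
    exact Nat.lt_succ_of_le (Finset.le_sup (f := id) (hF.mem_toFinset.mpr hx))
  have he : F \ Set.Iio n = ∅ := Set.diff_eq_empty.mpr hn
  refine le_antisymm (le_trans (iInf_le _ n) ?_) zero_le
  rw [he, hφ0]

lemma exhNorm_union (hφmono : ∀ A B : Set ℕ, A ⊆ B → φ A ≤ φ B)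
    (hφsub : ∀ A B : Set ℕ, φ (A ∪ B) ≤ φ A + φ B) (A B : Set ℕ) :
    exhNorm φ (A ∪ B) ≤ exhNorm φ A + exhNorm φ B := by
  have key : ∀ n m : ℕ, exhNorm φ (A ∪ B) ≤ φ (A \ Set.Iio n) + φ (B \ Set.Iio m) := by
    intro n m
    refine (iInf_le _ (max n m)).trans ?_
    refine le_trans (hφmono _ _ ?_) (hφsub _ _)
    rw [Set.union_diff_distrib]
    exact Set.union_subset_union
      (Set.diff_subset_diff_right (Set.Iio_subset_Iio (le_max_left _ _)))
      (Set.diff_subset_diff_right (Set.Iio_subset_Iio (le_max_right _ _)))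
  unfold exhNorm
  rw [ENNReal.iInf_add]
  refine le_iInf fun n => ?_
  rw [ENNReal.add_iInf]
  exact le_iInf fun m => key n m

lemma phi_biUnion_finset (hφ0 : φ ∅ = 0)
    (hφsub : ∀ A B : Set ℕ, φ (A ∪ B) ≤ φ A + φ B)
    (C : ℕ → Set ℕ) (s : Finset ℕ) :
    φ (⋃ i ∈ s, C i) ≤ ∑ i ∈ s, φ (C i) := by
  classical
  induction s using Finset.induction with
  | empty => simp [hφ0]
  | insert _ _ h ih =>
      rw [Finset.set_biUnion_insert, Finset.sum_insert h]
      exact (hφsub _ _).trans (add_le_add_right ih _)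

lemma phi_iUnion_le (hφ0 : φ ∅ = 0)
    (hφmono : ∀ A B : Set ℕ, A ⊆ B → φ A ≤ φ B)
    (hφsub : ∀ A B : Set ℕ, φ (A ∪ B) ≤ φ A + φ B)
    (hφlsc : ∀ A : Set ℕ, φ A = ⨆ n : ℕ, φ (A ∩ Set.Iio n))
    (C : ℕ → Set ℕ) :
    φ (⋃ i, C i) ≤ ∑' i, φ (C i) := by
  classical
  rw [hφlsc]
  refine iSup_le fun n => ?_
  set f : ℕ → ℕ := fun x => if h : ∃ i, x ∈ C i then h.choose else 0 with hf
  have key : (⋃ i, C i) ∩ Set.Iio n ⊆ ⋃ i ∈ Finset.image f (Finset.range n), C i := by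
    rintro x ⟨hx, hxn⟩
    have h : ∃ i, x ∈ C i := by simpa using hx
    refine Set.mem_biUnion (Finset.mem_image.mpr ⟨x, Finset.mem_range.mpr hxn, rfl⟩) ?_
    simp only [hf, dif_pos h]
    exact h.choose_spec
  exact (hφmono _ _ key).trans
    ((phi_biUnion_finset φ hφ0 hφsub C _).trans (ENNReal.sum_le_tsum _))

end aux

/-- If `φ` is a lscsm and `(Aₙ)` is an increasing sequence of subsets of `ℕ`
with `∑ ‖A_{n+1} \ Aₙ‖_φ < ∞`, then there is `A ⊆ ℕ` with `Aₙ \ A` finite for all `n`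
and `‖A △ Aₙ‖_φ → 0`. -/
theorem exists_pseudolimit_of_summable_exhNorm
    (φ : Set ℕ → ℝ≥0∞)
    (hφ0 : φ ∅ = 0)
    (hφmono : ∀ A B : Set ℕ, A ⊆ B → φ A ≤ φ B)
    (hφsub : ∀ A B : Set ℕ, φ (A ∪ B) ≤ φ A + φ B)
    (hφfin : ∀ F : Set ℕ, F.Finite → φ F ≠ ⊤)
    (hφlsc : ∀ A : Set ℕ, φ A = ⨆ n : ℕ, φ (A ∩ Set.Iio n))
    (A : ℕ → Set ℕ)
    (hAmono : ∀ m n, m ≤ n → A m ⊆ A n)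
    (hAsum : (∑' n : ℕ, exhNorm φ (A (n + 1) \ A n)) ≠ ⊤) :
    ∃ L : Set ℕ, (∀ n, (A n \ L).Finite) ∧
      Tendsto (fun n => exhNorm φ (symmDiff L (A n))) atTop (nhds 0) := by
  classical
  set B : ℕ → Set ℕ := fun n => A (n + 1) \ A n with hB
  have hBne : ∀ n, exhNorm φ (B n) ≠ ⊤ := fun n => ENNReal.ne_top_of_tsum_ne_top hAsum n
  have hk : ∀ n, ∃ k, φ (B n \ Set.Iio k) ≤ exhNorm φ (B n) + 2⁻¹ ^ n := by
    intro n
    have hpos : (2⁻¹ : ℝ≥0∞) ^ n ≠ 0 :=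
      pow_ne_zero n (ENNReal.inv_ne_zero.mpr (by norm_num))
    have h1 : (⨅ k, φ (B n \ Set.Iio k)) < exhNorm φ (B n) + 2⁻¹ ^ n :=
      ENNReal.lt_add_right (hBne n) hpos
    obtain ⟨k, hk⟩ := iInf_lt_iff.mp h1
    exact ⟨k, hk.le⟩
  choose k hkspec using hk
  set c : ℕ → ℝ≥0∞ := fun n => exhNorm φ (B n) + 2⁻¹ ^ n with hc
  have hcsum : (∑' n, c n) ≠ ⊤ := by
    rw [hc]
    simp only []
    rw [ENNReal.tsum_add]
    refine ENNReal.add_ne_top.mpr ⟨hAsum, ?_⟩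
    rw [ENNReal.tsum_geometric]
    refine ENNReal.inv_ne_top.mpr ?_
    have : (2⁻¹ : ℝ≥0∞) < 1 := by norm_num
    simpa [tsub_eq_zero_iff_le, not_le] using this
  set L : Set ℕ := A 0 ∪ ⋃ n, (B n \ Set.Iio (k n)) with hL
  -- decomposition of A n
  have hdecomp : ∀ n, A n ⊆ A 0 ∪ ⋃ i ∈ Set.Iio n, B i := by
    intro n
    induction n with
    | zero => intro x hx; exact Or.inl hx
    | succ m ih =>
        intro x hx
        by_cases hxm : x ∈ A m
        · rcases ih hxm with h | h
          · exact Or.inl h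
          · right
            obtain ⟨i, hi, hxi⟩ := by simpa using h
            exact Set.mem_biUnion (Set.mem_Iio.mpr (hi.trans (Nat.lt_succ_self m))) hxi
        · exact Or.inr (Set.mem_biUnion (Set.mem_Iio.mpr (Nat.lt_succ_self m)) ⟨hx, hxm⟩)
  refine ⟨L, ?_, ?_⟩
  · -- finiteness
    intro n
    have hsub : A n \ L ⊆ ⋃ i ∈ Set.Iio n, Set.Iio (k i) := by
      rintro x ⟨hx, hxL⟩
      rcases hdecomp n hx with h | h
      · exact absurd (Or.inl h) hxL
      · obtain ⟨i, hi, hxi⟩ := by simpa using h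
        have hxk : x ∈ Set.Iio (k i) := by
          by_contra hxk
          exact hxL (Or.inr (Set.mem_iUnion.mpr ⟨i, hxi, hxk⟩))
        exact Set.mem_biUnion (Set.mem_Iio.mpr hi) hxk
    exact (Set.Finite.biUnion (Set.finite_Iio n) (fun i _ => Set.finite_Iio _)).subset hsub
  · -- tendsto
    have hbound : ∀ n, exhNorm φ (symmDiff L (A n)) ≤ ∑' i, c (i + n) := by
      intro n
      have hfin : exhNorm φ (A n \ L) = 0 := by
        refine exhNorm_finite φ hφ0 ?_
        have hsub : A n \ L ⊆ ⋃ i ∈ Set.Iio n, Set.Iio (k i) := by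
          rintro x ⟨hx, hxL⟩
          rcases hdecomp n hx with h | h
          · exact absurd (Or.inl h) hxL
          · obtain ⟨i, hi, hxi⟩ := by simpa using h
            have hxk : x ∈ Set.Iio (k i) := by
              by_contra hxk
              exact hxL (Or.inr (Set.mem_iUnion.mpr ⟨i, hxi, hxk⟩))
            exact Set.mem_biUnion (Set.mem_Iio.mpr hi) hxk
        exact (Set.Finite.biUnion (Set.finite_Iio n) (fun i _ => Set.finite_Iio _)).subset hsub
      have htail : L \ A n ⊆ ⋃ i, (B (i + n) \ Set.Iio (k (i + n))) := by
        rintro x ⟨hx, hxn⟩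
        rcases hx with h | h
        · exact absurd (hAmono 0 n (Nat.zero_le n) h) hxn
        · obtain ⟨j, hxj⟩ := Set.mem_iUnion.mp h
          have hjn : n ≤ j := by
            by_contra hjn
            push_neg at hjn
            exact hxn (hAmono (j + 1) n hjn hxj.1.1)
          refine Set.mem_iUnion.mpr ⟨j - n, ?_⟩
          rwa [Nat.sub_add_cancel hjn]
      have h1 : exhNorm φ (symmDiff L (A n)) ≤
          exhNorm φ (L \ A n) + exhNorm φ (A n \ L) := by
        rw [Set.symmDiff_def]
        exact exhNorm_union φ hφmono hφsub _ _
      rw [hfin, add_zero] at h1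
      refine h1.trans ?_
      refine (exhNorm_le_phi φ _).trans ?_
      refine (hφmono _ _ htail).trans ?_
      refine (phi_iUnion_le φ hφ0 hφmono hφsub hφlsc _).trans ?_
      exact ENNReal.tsum_le_tsum fun i => (hkspec (i + n)).trans (le_refl (c (i + n)))
    have htail0 : Tendsto (fun n => ∑' i, c (i + n)) atTop (nhds 0) :=
      ENNReal.tendsto_sum_nat_add c hcsum
    exact tendsto_of_tendsto_of_tendsto_of_le_of_le tendsto_const_nhds htail0
      (fun n => zero_le) hbound
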